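/- arXiv:2302.11326 — 3 statements merged into one kernel-verified Lean document; each statement's English description precedes it below -/
import Mathlib

section
/- In a view where strictly more than half of the counted votes are for descendants of a block B, the GHOST fork-choice outputs a descendant of B. Formally: consider a finite tree of blocks rooted at genesis, a finite multiset M of votes each for some block, and the GHOST procedure that starting at genesis repeatedly moves to the child whose subtree has maximal weight (weight of a block B' being the number of votes in M for B' or its descendants), stopping at a leaf (a block with no children). If the number of votes in M for descendants of B (including B itself) exceeds |M|/2, then the output of GHOST is a descendant of B (or B itself). -/
open scoped Classical

/-- If strictly more than half of the votes in `M` are for descendants of `B`, then the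
GHOST fork-choice walk (characterized by: its output `out` is reachable from genesis,
is a leaf, and at each step the chosen child maximizes the subtree weight `w` among its
siblings) outputs a descendant of `B`. `Desc a b` means `a ⪯ b` (b is a descendant of a),
defined by reachability via the parent map. -/
theorem ghost_majority_output_descendant
    {Block : Type*} [Fintype Block] [DecidableEq Block]
    (genesis : Block) (par : Block → Block)
    (Desc : Block → Block → Prop)
    (hDesc : ∀ a b, Desc a b ↔ Relation.ReflTransGen (fun x y => par y = x) a b)
    (M : Multiset Block)
    (w : Block → ℕ)
    (hw : ∀ b, w b = Multiset.card (M.filter (fun v => Desc b v)))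
    (B out : Block)
    (hroot : Desc genesis out)
    (hBroot : Desc genesis B)
    (hleaf : ∀ c, par c = out → c = out)
    (hgreedy : ∀ c c', Desc c out → c ≠ genesis → par c' = par c → w c' ≤ w c)
    (hmaj : 2 * w B > Multiset.card M) :
    Desc B out := by
  set r : Block → Block → Prop := fun x y => par y = x with hr
  -- a leaf has no strict descendants
  have leaf : ∀ x, Relation.ReflTransGen r out x → x = out := by
    intro x h
    induction h with
    | refl => rfl
    | tail h1 h2 ih => subst ih; exact hleaf _ h2
  -- two ancestors of a common block are comparable (ancestor chains are deterministic)
  have comp : ∀ (a b v : Block), Relation.ReflTransGen r a v →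
      Relation.ReflTransGen r b v →
      Relation.ReflTransGen r a b ∨ Relation.ReflTransGen r b a := by
    intro a b v h1
    induction h1 with
    | refl => intro h2; exact Or.inr h2
    | @tail m v h1 h2 ih =>
      intro hb
      rcases Relation.ReflTransGen.cases_tail hb with h | ⟨c, hbc, hcv⟩
      · subst h
        exact Or.inl (h1.tail h2)
      · have hcm : c = m := by
          have : par v = c := hcv
          have : par v = m := h2
          rw [← hcv, ← h2]
        subst hcm
        exact ih hbc
  -- weight is antitone along descent
  have wmono : ∀ a b', Relation.ReflTransGen r a b' → w b' ≤ w a := by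
    intro a b' h
    rw [hw, hw]
    apply Multiset.card_le_card
    apply Multiset.monotone_filter_right
    intro v hv
    exact (hDesc a v).2 (h.trans ((hDesc b' v).1 hv))
  -- pigeonhole: two majority subtrees share a vote
  have overlap : ∀ (a b : Block), Multiset.card M < w a + w b →
      ∃ v, Desc a v ∧ Desc b v := by
    intro a b h
    rw [hw, hw] at h
    by_contra hno
    push_neg at hno
    have hdisj : M.filter (fun v => Desc a v ∧ Desc b v) = 0 := by
      rw [Multiset.filter_eq_nil]
      intro v _ hv
      exact hno v hv.1 hv.2
    have := Multiset.filter_add_filter (fun v => Desc a v) (fun v => Desc b v) M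
    have hcard := congrArg Multiset.card this
    rw [Multiset.card_add, Multiset.card_add, hdisj] at hcard
    simp only [Multiset.card_zero, add_zero] at hcard
    have hle : Multiset.card (M.filter (fun v => Desc a v ∨ Desc b v)) ≤ Multiset.card M :=
      Multiset.card_le_card (Multiset.filter_le _ M)
    omega
  -- main induction along the GHOST path
  have main : ∀ x, Relation.ReflTransGen r x out → Relation.ReflTransGen r x B →
      Relation.ReflTransGen r B out := by
    intro x hxout
    induction hxout using Relation.ReflTransGen.head_induction_on with
    | refl =>
      intro h
      have := leaf _ h
      subst this
      exact Relation.ReflTransGen.refl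
    | @head a c h' h ih =>
      intro haB
      rcases Relation.ReflTransGen.cases_head haB with h1 | ⟨z, haz, hzB⟩
      · subst h1
        exact h.head h'
      · by_cases hc : Relation.ReflTransGen r c B
        · exact ih hc
        · have hcg : c ≠ genesis := by
            intro hcg'
            exact hc (hcg'.symm ▸ (hDesc genesis B).1 hBroot)
          have hzc : w z ≤ w c := by
            apply hgreedy c z ((hDesc c out).2 h) hcg
            show par z = par c
            have h1 : par z = a := haz
            have h2 : par c = a := h'
            rw [h1, h2]
          have hBz : w B ≤ w z := wmono z B hzB
          have hov : ∃ v, Desc c v ∧ Desc B v := by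
            apply overlap
            omega
          rcases hov with ⟨v, hcv, hBv⟩
          rcases comp c B v ((hDesc c v).1 hcv) ((hDesc B v).1 hBv) with hcB | hBc
          · exact absurd hcB hc
          · exact hBc.trans h
  rw [hDesc]
  exact main genesis ((hDesc genesis out).1 hroot) ((hDesc genesis B).1 hBroot)
end

section
/- If all validators have been active (voted) at least once by slot s, then ∞-sleepiness at any slot t > s+1 implies that the active honest validators at slot t−1 form a strict majority of the whole validator set: |H_{t-1}| > n/2, where n is the total number of validators. -/
/-- `Hunion H s t = ⋃_{i=s}^{t} H i`. -/
def Hunion {V : Type*} [DecidableEq V] (H : ℕ → Finset V) (s t : ℕ) : Finset V :=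
  (Finset.Icc s t).biUnion H

/-- If every validator has voted by slot `s` or is adversarial, then ∞-sleepiness at a
slot `t > s + 1` implies that the active honest validators of slot `t-1` are a strict
majority of the whole validator set: `|H_{t-1}| > n/2`, i.e. `2|H_{t-1}| > n`. -/
theorem inf_sleepiness_majority {V : Type*} [Fintype V] [DecidableEq V]
    (H A : ℕ → Finset V) (n : ℕ) (hn : n = Fintype.card V)
    (s t : ℕ) (ht : t > s + 1)
    (hall : ∀ v : V, v ∈ Hunion H 0 (s - 1) ∪ A t)
    (hdisj : Disjoint (H (t - 1)) (A t))
    (hsleepy : (A t ∪ (Hunion H 0 (t - 2) \ H (t - 1))).card < (H (t - 1)).card) :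
    n < 2 * (H (t - 1)).card := by
  have hsub : (Finset.univ : Finset V) ⊆
      H (t - 1) ∪ (A t ∪ (Hunion H 0 (t - 2) \ H (t - 1))) := by
    intro v _
    rcases Finset.mem_union.mp (hall v) with hv | hv
    · by_cases hH : v ∈ H (t - 1)
      · exact Finset.mem_union_left _ hH
      · refine Finset.mem_union_right _ (Finset.mem_union_right _ ?_)
        refine Finset.mem_sdiff.mpr ⟨?_, hH⟩
        rcases Finset.mem_biUnion.mp hv with ⟨i, hi, hvi⟩
        refine Finset.mem_biUnion.mpr ⟨i, ?_, hvi⟩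
        simp only [Finset.mem_Icc] at hi ⊢
        exact ⟨hi.1, le_trans hi.2 (by omega)⟩
    · exact Finset.mem_union_right _ (Finset.mem_union_left _ hv)
  have h1 : n ≤ (H (t - 1) ∪ (A t ∪ (Hunion H 0 (t - 2) \ H (t - 1)))).card := by
    rw [hn, ← Finset.card_univ]
    exact Finset.card_le_card hsub
  calc n ≤ _ := h1
    _ ≤ (H (t - 1)).card + (A t ∪ (Hunion H 0 (t - 2) \ H (t - 1))).card :=
        Finset.card_union_le _ _
    _ < 2 * (H (t - 1)).card := by omega
end

section
/- Generic propose-vote-merge safety reduction: suppose a block B proposed at slot t'' is contained in the canonical chain of every active validator at all rounds from its proposal onward, and the confirmed chain of each validator at slot s is the prefix of its canonical chain consisting of blocks from slots ≤ s − κ. If t'' ∈ [t−κ, t) for validator v_i's slot t, then the confirmed chain of v_i at slot t is a prefix of (the chain ending at) B; and for any validator v_j at a later round with B in its canonical chain, the confirmed chains of v_i and v_j are comparable (one is a prefix of the other). -/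
/-- Generic propose-vote-merge safety reduction. Blocks form a tree under the ancestor
relation `le` (a partial order whose sets of predecessors are totally ordered), with
slots strictly increasing along chains. `chain v s` is the canonical chain (head) of
validator `v` at slot `s`, and `Ch v s` its confirmed chain: the prefix of `chain v s`
consisting of blocks of slot `≤ s - κ`. If a block `B` of slot `t'' ∈ [t-κ, t)` is in
the canonical chain of validator `i` at slot `t` and of validator `j` at a later slot
`s'`, then `Ch i t ⪯ B`, and the confirmed chains of `i` and `j` are comparable. -/
theorem pvm_safety_reduction {Block Validator : Type*}
    (le : Block → Block → Prop)
    (hrefl : ∀ a, le a a)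
    (htrans : ∀ a b c, le a b → le b c → le a c)
    (hantisymm : ∀ a b, le a b → le b a → a = b)
    (htree : ∀ x a b, le a x → le b x → le a b ∨ le b a)
    (slot : Block → ℕ)
    (hslot : ∀ a b, le a b → a ≠ b → slot a < slot b)
    (chain Ch : Validator → ℕ → Block) (κ : ℕ)
    (hconf1 : ∀ v s, le (Ch v s) (chain v s))
    (hconf2 : ∀ v s, slot (Ch v s) ≤ s - κ)
    (hconf3 : ∀ v s X, le X (chain v s) → slot X ≤ s - κ → le X (Ch v s))
    (B : Block) (t'' t : ℕ) (hBslot : slot B = t'')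
    (ht1 : t - κ ≤ t'') (ht2 : t'' < t)
    (i j : Validator) (s' : ℕ) (hs' : t ≤ s')
    (hBi : le B (chain i t)) (hBj : le B (chain j s')) :
    le (Ch i t) B ∧ (le (Ch i t) (Ch j s') ∨ le (Ch j s') (Ch i t)) := by
  have hcomp := htree (chain i t) (Ch i t) B (hconf1 i t) hBi
  have h1 : le (Ch i t) B := by
    rcases hcomp with h | h
    · exact h
    · rcases eq_or_ne B (Ch i t) with heq | hne
      · rw [heq]; exact hrefl _
      · exfalso
        have := hslot B (Ch i t) h hne
        have h2 := hconf2 i t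
        omega
  refine ⟨h1, Or.inl ?_⟩
  exact hconf3 j s' (Ch i t) (htrans _ _ _ h1 hBj)
    (le_trans (hconf2 i t) (by omega))
end
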